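/- In ℚ[[q]][[x]], the identity exp(∑_{k≥1} x^k/(k(1-q^k))) = e_q(x/(1-q)) holds, where e_q(y) = ∑_{n≥0} y^n/[n]_q! is the q-exponential function. -/

import Mathlib

/-- Formal exponential of a power series (with zero constant term) over a `ℚ`-algebra. -/
noncomputable def ExpPS {A : Type*} [CommRing A] [Algebra ℚ A] (f : PowerSeries A) :
    PowerSeries A :=
  PowerSeries.mk fun n =>
    PowerSeries.coeff n (∑ m ∈ Finset.range (n + 1), ((m.factorial : ℚ)⁻¹) • f ^ m)

/-- The q-factorial `[n]_q! = ∏_{j=1}^n (1 + q + ⋯ + q^{j-1})`. -/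
noncomputable def qFact (n : ℕ) : PowerSeries ℚ :=
  ∏ j ∈ Finset.Icc 1 n, ∑ i ∈ Finset.range j, (PowerSeries.X : PowerSeries ℚ) ^ i

/-! Both sides `E` solve `E' = E · V` with `E(0) = 1`, where `V = ∑ₙ xⁿ / (1 - qⁿ⁺¹)` is the
derivative of the exponent, and this linear ODE has only one solution over a `ℚ`-algebra. For the
left side this is the chain rule. The right side `G = ∑ₙ xⁿ / (q;q)ₙ` satisfies the q-difference
equation `G(qx) = (1 - x) G(x)`, and `q V(qx) = V(x) - 1/(1 - x)`; together they give
`q H(qx) = (1 - x) H(x)` for `H = G' - G V`, i.e. `(1 - qⁿ⁺¹) hₙ = hₙ₋₁`, so `H = 0`.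
In the code both `q` (the variable of `ℚ⟦X⟧`) and `x` (that of `ℚ⟦X⟧⟦X⟧`) are written `X`. -/

open PowerSeries

section Exp

variable {A : Type*} [CommRing A] [Algebra ℚ A]

theorem ExpPS_eq_subst_exp {g : A⟦X⟧} (hg : constantCoeff g = 0) :
    ExpPS g = (exp A).subst g := by
  ext n
  have hvanish : ∀ m, n < m → coeff n (g ^ m) = 0 := fun m hm =>
    X_pow_dvd_iff.mp (pow_dvd_pow_of_dvd (X_dvd_iff.mpr hg) m) n hm
  rw [coeff_subst' (.of_constantCoeff_zero' hg), finsum_eq_sum_of_support_subset _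
    (s := Finset.range (n + 1)) fun m hm => Finset.mem_range.mpr <|
      by_contra fun h => hm (by simp [hvanish m (by omega)])]
  simp only [ExpPS, coeff_mk, map_sum, coeff_exp, one_div]
  refine Finset.sum_congr rfl fun m _ => ?_
  rw [coeff_smul, Algebra.smul_def, smul_eq_mul]

theorem derivative_ExpPS {g : A⟦X⟧} (hg : constantCoeff g = 0) :
    d⁄dX A (ExpPS g) = ExpPS g * d⁄dX A g := by
  rw [ExpPS_eq_subst_exp hg, derivative_subst (.of_constantCoeff_zero' hg), derivative_exp]

theorem constantCoeff_ExpPS (g : A⟦X⟧) : constantCoeff (ExpPS g) = 1 := by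
  rw [← coeff_zero_eq_constantCoeff_apply]
  simp [ExpPS]

theorem derivative_mk_inv_smul (a : ℕ → A) :
    d⁄dX A (mk fun k => if k = 0 then 0 else ((k : ℚ)⁻¹) • a k) = mk fun n => a (n + 1) := by
  ext n
  rw [coeff_derivative, coeff_mk, coeff_mk, if_neg n.succ_ne_zero, Algebra.smul_def,
    mul_right_comm, show (n : A) + 1 = algebraMap ℚ A (n + 1 : ℕ) by simp, ← map_mul,
    inv_mul_cancel₀ (by positivity), map_one, one_mul]

end Exp

section LinearODE

variable {A : Type*} [CommRing A] [IsAddTorsionFree A]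

theorem eq_zero_of_derivative_eq_mul {Y h : A⟦X⟧} (hY₀ : constantCoeff Y = 0)
    (hY : d⁄dX A Y = Y * h) : Y = 0 := by
  ext n
  induction n using Nat.strong_induction_on with
  | _ n ih =>
    cases n with
    | zero => simpa using hY₀
    | succ n =>
      have hcoeff : coeff n (d⁄dX A Y) = 0 := by
        rw [hY, coeff_mul]
        refine Finset.sum_eq_zero fun p hp => ?_
        rw [ih p.1 (Finset.Nat.antidiagonal.fst_lt hp), map_zero, zero_mul]
      rw [coeff_derivative, ← Nat.cast_succ, mul_comm, ← nsmul_eq_mul] at hcoeff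
      simpa using (smul_eq_zero.mp hcoeff).resolve_left n.succ_ne_zero

theorem eq_of_derivative_eq_mul {E₁ E₂ h : A⟦X⟧} (h₀ : constantCoeff E₁ = constantCoeff E₂)
    (h₁ : d⁄dX A E₁ = E₁ * h) (h₂ : d⁄dX A E₂ = E₂ * h) : E₁ = E₂ :=
  sub_eq_zero.mp <| eq_zero_of_derivative_eq_mul (by rw [map_sub, h₀, sub_self])
    (by rw [map_sub, h₁, h₂, sub_mul])

end LinearODE

section QDifference

variable {K : Type*} [CommRing K] {q : K}

theorem derivative_rescale (f : K⟦X⟧) :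
    d⁄dX K (rescale q f) = C q * rescale q (d⁄dX K f) := by
  ext n
  simp only [coeff_derivative, coeff_rescale, coeff_C_mul, pow_succ]
  ring

theorem rescale_mk_eq_one_sub_X_mul {b : ℕ → K}
    (hb : ∀ n, (1 - q ^ (n + 1)) * b (n + 1) = b n) : rescale q (mk b) = (1 - X) * mk b := by
  ext n
  cases n with
  | zero => simp
  | succ n =>
    rw [coeff_rescale, sub_mul, one_mul, map_sub, coeff_succ_X_mul, coeff_mk, coeff_mk, ← hb n]
    ring

theorem C_mul_rescale_mk_eq_sub_mk_one {u : ℕ → K} (hu : ∀ n, (1 - q ^ (n + 1)) * u n = 1) :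
    C q * rescale q (mk u) = mk u - mk 1 := by
  ext n
  rw [coeff_C_mul, coeff_rescale, map_sub, coeff_mk, coeff_mk, Pi.one_apply]
  linear_combination -hu n

variable [NoZeroDivisors K] (hq : ∀ n, 1 - q ^ (n + 1) ≠ 0)
include hq

theorem eq_zero_of_C_mul_rescale_eq {H : K⟦X⟧} (hH : C q * rescale q H = (1 - X) * H) :
    H = 0 := by
  ext n
  refine (mul_eq_zero.mp ?_).resolve_left (hq n)
  induction n with
  | zero =>
    have h₀ := congrArg (coeff 0) hH
    rw [coeff_C_mul, coeff_rescale, sub_mul, one_mul, map_sub, coeff_zero_X_mul] at h₀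
    linear_combination -h₀
  | succ n ih =>
    have hn := congrArg (coeff (n + 1)) hH
    rw [coeff_C_mul, coeff_rescale, sub_mul, one_mul, map_sub, coeff_succ_X_mul,
      (mul_eq_zero.mp ih).resolve_left (hq n)] at hn
    linear_combination -hn

theorem derivative_eq_mul_of_rescale {G V : K⟦X⟧} (hG : rescale q G = (1 - X) * G)
    (hV : C q * rescale q V = V - mk 1) : d⁄dX K G = G * V := by
  refine sub_eq_zero.mp (eq_zero_of_C_mul_rescale_eq hq ?_)
  have hdG : C q * rescale q (d⁄dX K G) = (1 - X) * d⁄dX K G - G := by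
    rw [← derivative_rescale, hG, Derivation.leibniz]
    simp only [smul_eq_mul, map_sub, Derivation.map_one_eq_zero, derivative_X]
    ring
  rw [map_sub, map_mul, mul_sub, hdG, hG]
  linear_combination -(1 - X) * G * hV + G * mk_one_mul_one_sub_eq_one (S := K)

end QDifference

theorem one_sub_X_pow_succ_ne_zero (n : ℕ) : (1 : ℚ⟦X⟧) - X ^ (n + 1) ≠ 0 := fun h => by
  simpa using congrArg constantCoeff h

theorem one_sub_X_pow_succ_mul_inv (n : ℕ) :
    (1 - X ^ (n + 1) : ℚ⟦X⟧) * (1 - X ^ (n + 1))⁻¹ = 1 :=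
  PowerSeries.mul_inv_cancel _ (by simp)

theorem qFact_succ (n : ℕ) : qFact (n + 1) = qFact n * ∑ i ∈ Finset.range (n + 1), X ^ i :=
  Finset.prod_Icc_succ_top (by omega) _

noncomputable def invQPochhammer (n : ℕ) : ℚ⟦X⟧ := (1 - X)⁻¹ ^ n * (qFact n)⁻¹

theorem one_sub_X_pow_succ_mul_invQPochhammer_succ (n : ℕ) :
    (1 - X ^ (n + 1)) * invQPochhammer (n + 1) = invQPochhammer n := by
  have h₁ : (1 - X : ℚ⟦X⟧) * (1 - X)⁻¹ = 1 := PowerSeries.mul_inv_cancel _ (by simp)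
  have h₂ : (∑ i ∈ Finset.range (n + 1), X ^ i : ℚ⟦X⟧) *
      (∑ i ∈ Finset.range (n + 1), X ^ i)⁻¹ = 1 :=
    PowerSeries.mul_inv_cancel _ (by simp [Finset.sum_range_succ'])
  rw [invQPochhammer, invQPochhammer, qFact_succ, PowerSeries.mul_inv_rev, ← geom_sum_mul_neg]
  linear_combination (1 - X : ℚ⟦X⟧)⁻¹ ^ n * (qFact n)⁻¹ * ((1 - X) * (1 - X)⁻¹) * h₂
    + (1 - X : ℚ⟦X⟧)⁻¹ ^ n * (qFact n)⁻¹ * h₁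

/-- In `ℚ[[q]][[x]]`: `exp (∑_{k≥1} x^k/(k(1-q^k))) = e_q(x/(1-q))`, where
`e_q(y) = ∑_n y^n/[n]_q!` is the q-exponential, so that
`e_q(x/(1-q)) = ∑_n x^n/((1-q)^n [n]_q!)`. -/
theorem exp_eq_q_exponential :
    ExpPS (PowerSeries.mk fun k =>
        if k = 0 then 0
        else ((k : ℚ)⁻¹) • (1 - (PowerSeries.X : PowerSeries ℚ) ^ k)⁻¹)
      = PowerSeries.mk fun n =>
          ((1 - (PowerSeries.X : PowerSeries ℚ))⁻¹) ^ n * (qFact n)⁻¹ := by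
  have := IsAddTorsionFree.of_module_rat (M := ℚ⟦X⟧)
  have hG : d⁄dX ℚ⟦X⟧ (mk invQPochhammer) = mk invQPochhammer * mk fun n => (1 - X ^ (n + 1))⁻¹ :=
    derivative_eq_mul_of_rescale one_sub_X_pow_succ_ne_zero
      (rescale_mk_eq_one_sub_X_mul one_sub_X_pow_succ_mul_invQPochhammer_succ)
      (C_mul_rescale_mk_eq_sub_mk_one one_sub_X_pow_succ_mul_inv)
  refine eq_of_derivative_eq_mul (by simp [constantCoeff_ExpPS, qFact])
    (derivative_ExpPS (by simp)) ?_
  rw [derivative_mk_inv_smul]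
  exact hG
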